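/- Let d be an odd positive integer, δ ∈ ℝ, and let the Markov chain (l_j) on {-(d-1)/2,…,(d-1)/2} start at l_0 = k with transition matrix M_{lk} = |⟨θ_l|θ_{k+δ}⟩|². Then for any integer m with |m| ≤ (d-1)/2 and any I ≥ 1, the expectation E[exp(2πi m l_I / d)] equals e^{2πim(k + Iδ)/d} · (1 - (1 - e^{2πiδ·sign(-m)})|m|/d)^I. -/

import Mathlib

open Complex

/-- Physical index: k ∈ Fin d represents the integer k - (d-1)/2. -/
def clockIdx (d : ℕ) (k : Fin d) : ℤ := (k : ℤ) - ((d : ℤ) - 1) / 2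

/-- The "time state" vector |θ_s⟩ ∈ ℂ^d with components d^{-1/2} e^{-2πi s n/d}. -/
noncomputable def clockVec (d : ℕ) (s : ℝ) : EuclideanSpace ℂ (Fin d) := WithLp.toLp 2 fun n =>
  (1 / Real.sqrt d : ℝ) * Complex.exp (-2 * Real.pi * Complex.I * s * (clockIdx d n : ℂ) / d)

/-- The transition matrix M_{lk} = |⟨θ_l | θ_{k+δ}⟩|². -/
noncomputable def clockM (d : ℕ) (δ : ℝ) : Matrix (Fin d) (Fin d) ℂ :=
  Matrix.of fun l k =>
    ((‖(inner ℂ (clockVec d (clockIdx d l : ℝ))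
        (clockVec d ((clockIdx d k : ℝ) + δ)) : ℂ)‖) ^ 2 : ℝ)

/-!
The characters `χ_m l = exp (2πi m l / d)` are left eigenvectors of `M`. Expanding
`|⟨θ_l|θ_x⟩|²` (with `x = k + δ`) as a double sum over `n, n'` and summing it against `χ_m`,
orthogonality of characters keeps only the partner `n' ≡ n + m (mod d)`. For `d - |m|` values
of `n` the partner is `n + m` itself and contributes the phase `exp (2πi m x / d)`; for the other
`|m|` values it wraps around the index range, so `n - n'` shifts by `± d` and the phase picks up
`exp (-2πi x sign m) = exp (-2πi δ sign m)`, because `k` is an integer. Hence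
`χ_m ᵥ* M = exp (2πi m δ / d) λ_m • χ_m` with `λ_m = 1 - (1 - exp (-2πi δ sign m)) |m| / d`,
and the theorem follows by iteration.
-/

open Real Finset
open scoped Matrix

lemma sum_range_add_ediv_eq {M : Type*} [AddCommMonoid M] {d : ℕ} {m : ℤ} (hm : m.natAbs ≤ d)
    (f : ℤ → M) :
    ∑ n ∈ range d, f ((n + m) / d) = (d - m.natAbs) • f 0 + m.natAbs • f m.sign := by
  have quotient_eq {x : ℤ} (q : ℤ) (h₁ : q * d ≤ x) (h₂ : x < q * d + d) : f (x / d) = f q := by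
    rw [(Int.ediv_eq_iff_of_pos (by omega)).2 ⟨h₁, h₂⟩]
  rcases le_or_gt 0 m with hm0 | hm0
  · rw [show range d = range ((d - m.natAbs) + m.natAbs) by rw [Nat.sub_add_cancel hm],
      sum_range_add, sum_congr rfl fun n hn => quotient_eq 0 (by omega) (by grind),
      sum_congr rfl fun n hn => quotient_eq m.sign (by grind) (by grind)]
    simp
  · rw [show range d = range (m.natAbs + (d - m.natAbs)) by rw [Nat.add_sub_cancel' hm],
      sum_range_add, sum_congr rfl fun n hn => quotient_eq m.sign (by grind) (by grind),
      sum_congr rfl fun n hn => quotient_eq 0 (by omega) (by grind)]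
    simp [add_comm]

lemma sum_fin_ite_dvd_sub {M : Type*} [AddCommMonoid M] {d : ℕ} (hd : 0 < d) (a : ℤ)
    (g : ℤ → M) :
    ∑ j : Fin d, (if (d : ℤ) ∣ a - j then g j else 0) = g (a % d) := by
  have hd' : (0 : ℤ) < d := by exact_mod_cast hd
  have dvd_iff (j : Fin d) : (d : ℤ) ∣ a - j ↔ (j : ℤ) = a % d := by
    rw [← Int.modEq_iff_dvd, Int.ModEq, Int.emod_eq_of_lt (by positivity) (by exact_mod_cast j.2)]
  let j₀ : Fin d := ⟨(a % d).toNat, by have := Int.emod_lt_of_pos a hd'; omega⟩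
  have hj₀ : (j₀ : ℤ) = a % d := Int.toNat_of_nonneg (Int.emod_nonneg a hd'.ne')
  rw [sum_eq_single j₀ (fun j _ hj => if_neg fun h => hj (Fin.ext (by grind))) (by simp),
    if_pos ((dvd_iff j₀).2 hj₀), hj₀]

theorem Matrix.vecMul_pow_of_vecMul_eq_smul {n R : Type*} [Fintype n] [DecidableEq n]
    [CommSemiring R] {A : Matrix n n R} {v : n → R} {c : R} (h : v ᵥ* A = c • v) (k : ℕ) :
    v ᵥ* A ^ k = c ^ k • v := by
  induction k with
  | zero => simp
  | succ k ih => rw [pow_succ, ← vecMul_vecMul, ih, smul_vecMul, h, smul_smul, pow_succ]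

lemma sum_exp_clockIdx {d : ℕ} (hd : 0 < d) (t : ℤ) :
    ∑ l : Fin d, Complex.exp (2 * π * Complex.I * t * clockIdx d l / d)
      = if (d : ℤ) ∣ t then (d : ℂ) else 0 := by
  have hprim := Complex.isPrimitiveRoot_exp d hd.ne'
  set ζ := Complex.exp (2 * π * Complex.I / d) ^ t
  have hζ₀ : ζ ≠ 0 := zpow_ne_zero _ (Complex.exp_ne_zero _)
  have hterm (l : Fin d) : Complex.exp (2 * π * Complex.I * t * clockIdx d l / d)
      = ζ ^ (l : ℕ) * ζ ^ (-(((d : ℤ) - 1) / 2)) := by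
    rw [← zpow_natCast, ← zpow_add₀ hζ₀, ← zpow_mul, ← Complex.exp_int_mul]
    congr 1
    push_cast [clockIdx]
    ring
  simp_rw [hterm, ← sum_mul]
  rw [Fin.sum_univ_eq_sum_range (ζ ^ ·)]
  split_ifs with h
  · simp [ζ, (hprim.zpow_eq_one_iff_dvd t).2 h]
  · have hζd : ζ ^ d = 1 := by
      rw [← zpow_natCast, ← zpow_mul, hprim.zpow_eq_one_iff_dvd]
      exact dvd_mul_left _ _
    rw [geom_sum_eq (mt (hprim.zpow_eq_one_iff_dvd t).1 h), hζd]
    simp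

lemma inner_clockVec (d : ℕ) (s t : ℝ) :
    inner ℂ (clockVec d s) (clockVec d t)
      = 1 / d * ∑ n : Fin d, Complex.exp (2 * π * Complex.I * (s - t) * clockIdx d n / d) := by
  rw [PiLp.inner_apply, mul_sum]
  refine sum_congr rfl fun n _ => ?_
  simp only [clockVec, RCLike.inner_apply, map_mul, ← Complex.exp_conj, Complex.conj_ofReal,
    map_div₀, map_neg, map_ofNat, Complex.conj_I, map_intCast, map_natCast]
  rw [mul_mul_mul_comm, ← Complex.exp_add, ← Complex.ofReal_mul, div_mul_div_comm,
    Real.mul_self_sqrt d.cast_nonneg]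
  push_cast
  ring_nf

lemma norm_inner_clockVec_sq (d : ℕ) (s t : ℝ) :
    ((‖inner ℂ (clockVec d s) (clockVec d t)‖ ^ 2 : ℝ) : ℂ)
      = 1 / d ^ 2 * ∑ n : Fin d, ∑ n' : Fin d,
          Complex.exp (2 * π * Complex.I * (s - t) * ((n : ℤ) - n' : ℤ) / d) := by
  rw [Complex.ofReal_pow, ← Complex.mul_conj', inner_clockVec, map_mul, map_sum,
    mul_mul_mul_comm, sum_mul_sum]
  congr 1
  · simp [sq]
  refine sum_congr rfl fun n _ => sum_congr rfl fun n' _ => ?_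
  rw [← Complex.exp_conj, ← Complex.exp_add]
  congr 1
  simp only [map_div₀, map_mul, map_sub, map_ofNat, Complex.conj_I, Complex.conj_ofReal,
    map_intCast, map_natCast, clockIdx]
  push_cast
  ring

noncomputable def clockChar (d : ℕ) (m : ℤ) (l : Fin d) : ℂ :=
  Complex.exp (2 * π * Complex.I * m * clockIdx d l / d)

lemma sum_clockChar_mul_clockM {d : ℕ} (hd : 0 < d) (δ : ℝ) (m : ℤ) (k : Fin d) :
    ∑ l, clockChar d m l * clockM d δ l k
      = 1 / d * ∑ n : Fin d, Complex.exp
          (-2 * π * Complex.I * ((clockIdx d k : ℝ) + δ) * ((n : ℤ) - (n + m) % d : ℤ) / d) := by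
  set x : ℂ := ((clockIdx d k : ℝ) : ℂ) + δ with hx
  calc ∑ l, clockChar d m l * clockM d δ l k
      = 1 / d ^ 2 * ∑ n : Fin d, ∑ n' : Fin d,
          Complex.exp (-2 * π * Complex.I * x * ((n : ℤ) - n' : ℤ) / d)
            * ∑ l : Fin d,
                Complex.exp (2 * π * Complex.I * ((n : ℤ) + m - n' : ℤ) * clockIdx d l / d) := by
        simp only [clockM, Matrix.of_apply, norm_inner_clockVec_sq, clockChar, mul_sum]
        rw [sum_comm]
        refine sum_congr rfl fun n _ => ?_
        rw [sum_comm]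
        refine sum_congr rfl fun n' _ => sum_congr rfl fun l _ => ?_
        rw [mul_left_comm, ← Complex.exp_add, ← Complex.exp_add]
        congr 2
        push_cast [hx]
        ring
    _ = 1 / d * ∑ n : Fin d, ∑ n' : Fin d, if (d : ℤ) ∣ (n + m) - n'
          then Complex.exp (-2 * π * Complex.I * x * ((n : ℤ) - n' : ℤ) / d) else 0 := by
        simp only [sum_exp_clockIdx hd, mul_ite, mul_zero, mul_sum]
        refine sum_congr rfl fun n _ => sum_congr rfl fun n' _ => ?_
        split_ifs <;> field_simp
    _ = _ := by
        congr 1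
        exact sum_congr rfl fun n _ => sum_fin_ite_dvd_sub hd (n + m)
          (fun j => Complex.exp (-2 * π * Complex.I * x * ((n : ℤ) - j : ℤ) / d))

lemma clockChar_vecMul_clockM {d : ℕ} (hd : 0 < d) (δ : ℝ) {m : ℤ} (hm : m.natAbs ≤ d) :
    clockChar d m ᵥ* clockM d δ
      = (Complex.exp (2 * π * Complex.I * m * δ / d)
          * (1 - (1 - Complex.exp (2 * π * Complex.I * δ * ((-m).sign : ℤ))) * (|m| : ℤ) / d))
        • clockChar d m := by
  have hd' : (d : ℂ) ≠ 0 := by exact_mod_cast hd.ne'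
  ext k
  have wrap (n : ℤ) :
      Complex.exp (-2 * π * Complex.I * ((clockIdx d k : ℝ) + δ) * (n - (n + m) % d : ℤ) / d)
        = Complex.exp (2 * π * Complex.I * m * ((clockIdx d k : ℝ) + δ) / d)
          * Complex.exp (-2 * π * Complex.I * δ * ((n + m) / d : ℤ)) := by
    rw [← mul_one (Complex.exp (2 * π * Complex.I * m * _ / d)),
      ← Complex.exp_int_mul_two_pi_mul_I (-(clockIdx d k * ((n + m) / d))),
      ← Complex.exp_add, ← Complex.exp_add, Int.emod_def]
    congr 1
    push_cast
    field_simp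
    ring
  rw [Matrix.vecMul, dotProduct, sum_clockChar_mul_clockM hd,
    sum_congr rfl fun (n : Fin d) _ => wrap (n : ℕ), ← mul_sum,
    Fin.sum_univ_eq_sum_range (fun n => Complex.exp (-2 * π * Complex.I * δ * ((n + m) / d : ℤ))),
    sum_range_add_ediv_eq hm (fun q => Complex.exp (-2 * π * Complex.I * δ * q)),
    Pi.smul_apply, smul_eq_mul, clockChar, Int.sign_neg, nsmul_eq_mul, nsmul_eq_mul,
    Nat.cast_sub hm, Nat.cast_natAbs]
  have hphase : Complex.exp (2 * π * Complex.I * m * ((clockIdx d k : ℝ) + δ) / d)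
      = Complex.exp (2 * π * Complex.I * m * δ / d)
        * Complex.exp (2 * π * Complex.I * m * clockIdx d k / d) := by
    rw [← Complex.exp_add]
    push_cast
    ring_nf
  have hsign : Complex.exp (2 * π * Complex.I * δ * (-m.sign : ℤ))
      = Complex.exp (-2 * π * Complex.I * δ * m.sign) := by
    push_cast
    ring_nf
  rw [hphase, hsign, Int.cast_zero, mul_zero, Complex.exp_zero]
  field_simp
  ring

theorem stmt_14_general (d : ℕ) (hpos : 0 < d) (δ : ℝ) (m : ℤ)
    (hm : |m| ≤ ((d : ℤ) - 1) / 2) (I : ℕ) (k : Fin d) :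
    ∑ l : Fin d, (clockM d δ ^ I) l k
        * Complex.exp (2 * Real.pi * Complex.I * (m : ℂ) * (clockIdx d l : ℂ) / d)
      = Complex.exp (2 * Real.pi * Complex.I * (m : ℂ) * ((clockIdx d k : ℂ) + (I : ℂ) * δ) / d)
        * (1 - (1 - Complex.exp (2 * Real.pi * Complex.I * δ * (((-m).sign : ℤ) : ℂ)))
            * ((|m| : ℤ) : ℂ) / d) ^ I := by
  have hmd : m.natAbs ≤ d := by rw [← Int.ofNat_le, Int.natCast_natAbs]; omega
  have hpow :=
    congrFun (Matrix.vecMul_pow_of_vecMul_eq_smul (clockChar_vecMul_clockM hpos δ hmd) I) k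
  simp only [Matrix.vecMul, dotProduct, Pi.smul_apply, smul_eq_mul, clockChar] at hpow
  rw [sum_congr rfl fun l _ => mul_comm _ _, hpow, mul_pow, ← Complex.exp_nat_mul,
    mul_right_comm, ← Complex.exp_add]
  congr 2
  ring

/-- The expectation E[exp(2πi m l_I / d)] of the Markov chain started at k after I steps:
    ∑_{l} (M^I)_{l k} exp(2πi m l / d). -/
theorem stmt_14 (d : ℕ) (hd : Odd d) (hpos : 0 < d) (δ : ℝ) (m : ℤ)
    (hm : |m| ≤ ((d : ℤ) - 1) / 2) (I : ℕ) (hI : 1 ≤ I) (k : Fin d) :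
    ∑ l : Fin d, (clockM d δ ^ I) l k
        * Complex.exp (2 * Real.pi * Complex.I * (m : ℂ) * (clockIdx d l : ℂ) / d)
      = Complex.exp (2 * Real.pi * Complex.I * (m : ℂ) * ((clockIdx d k : ℂ) + (I : ℂ) * δ) / d)
        * (1 - (1 - Complex.exp (2 * Real.pi * Complex.I * δ * (((-m).sign : ℤ) : ℂ)))
            * ((|m| : ℤ) : ℂ) / d) ^ I :=
  stmt_14_general d hpos δ m hm I k
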